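/- Let z : [0,∞) → ℝ¹⁴ be differentiable and satisfy ż(t) = A z(t) + E d(t) for all t ≥ 0, where ‖d(t)‖ ≤ r̄ for all t ≥ 0. Set α = λ_min(Q), c = 2‖P·E‖, R = (c/α) r̄, and ρ* = λ_max(P) R². Then forward invariance holds from any starting time: for every ρ ≥ ρ* and every t₀ ≥ 0, if V(z(t₀)) ≤ ρ then V(z(t)) ≤ ρ for all t ≥ t₀. -/

import Mathlib

open Matrix Filter

noncomputable section

abbrev V14 := EuclideanSpace ℝ (Fin 14)
abbrev V3 := EuclideanSpace ℝ (Fin 3)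

/-- Lyapunov function `V(z) = zᵀ P z`. -/
def lyapV (P : Matrix (Fin 14) (Fin 14) ℝ) (z : V14) : ℝ := z ⬝ᵥ P.mulVec z

/-- Right-hand side of the perturbed linear ODE `ż = A z + E d`, as an element of
Euclidean space. -/
def odeRHS (A : Matrix (Fin 14) (Fin 14) ℝ) (E : Matrix (Fin 14) (Fin 3) ℝ)
    (zt : V14) (dt : V3) : V14 := WithLp.toLp 2 (A.mulVec zt + E.mulVec dt)

/-- Operator norm of the matrix product `P·E` viewed as a linear map `ℝ³ → ℝ¹⁴`
between Euclidean spaces. -/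
def opPE (P : Matrix (Fin 14) (Fin 14) ℝ) (E : Matrix (Fin 14) (Fin 3) ℝ) : ℝ :=
  ‖LinearMap.toContinuousLinearMap (Matrix.toEuclideanLin (P * E))‖

/-- Smallest eigenvalue of a Hermitian (real symmetric) matrix. -/
def lamMin (Q : Matrix (Fin 14) (Fin 14) ℝ) (hQ : Q.IsHermitian) : ℝ := ⨅ i, hQ.eigenvalues i

/-- Largest eigenvalue of a Hermitian (real symmetric) matrix. -/
def lamMax (P : Matrix (Fin 14) (Fin 14) ℝ) (hP : P.IsHermitian) : ℝ := ⨆ i, hP.eigenvalues i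


open scoped InnerProductSpace Topology

/-! Along a trajectory, `V̇ = zᵀ(AᵀP + PA)z + 2 zᵀPEd ≤ -α‖z‖² + c r̄ ‖z‖ = α‖z‖(R - ‖z‖)`,
which is nonpositive as soon as `‖z‖ ≥ R`. On the other hand `V(z) ≥ ρ ≥ λ_max(P) R²` together with
`V(z) ≤ λ_max(P)‖z‖²` forces `‖z‖ ≥ R`. Hence `V ∘ z` is nonincreasing whenever it is at or above
the level `ρ`, so it cannot cross that level upwards. -/

theorem image_le_of_deriv_right_nonpos_of_ge {f f' : ℝ → ℝ} {a b ρ : ℝ}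
    (hf : ContinuousOn f (Set.Icc a b))
    (hf' : ∀ x ∈ Set.Ico a b, HasDerivWithinAt f (f' x) (Set.Ici x) x) (ha : f a ≤ ρ)
    (bound : ∀ x ∈ Set.Ico a b, ρ ≤ f x → f' x ≤ 0) : ∀ ⦃x⦄, x ∈ Set.Icc a b → f x ≤ ρ := by
  intro x hx
  -- Fence `f` by `ρ + ε (x - a)`, whose slope `ε > 0` beats `f'` wherever `f` reaches it.
  have hfence (ε : ℝ) (hε : 0 < ε) : f x ≤ ρ + ε * (x - a) := by
    refine image_le_of_deriv_right_lt_deriv_boundary' hf hf' (B := fun y ↦ ρ + ε * (y - a))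
      (B' := fun _ ↦ ε) (by simpa using ha) (by fun_prop) (fun y _ ↦ ?_) (fun y hy hfy ↦ ?_) hx
    · simpa using (((hasDerivAt_id y).sub_const a).const_mul ε).const_add ρ |>.hasDerivWithinAt
    · have : ρ ≤ f y := hfy ▸ le_add_of_nonneg_right (mul_nonneg hε.le (sub_nonneg.2 hy.1))
      exact (bound y hy this).trans_lt hε
  have hlim : Tendsto (fun ε ↦ ρ + ε * (x - a)) (𝓝[>] 0) (𝓝 ρ) := by
    have hcont : Continuous fun ε : ℝ ↦ ρ + ε * (x - a) := by fun_prop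
    simpa using tendsto_nhdsWithin_of_tendsto_nhds (hcont.tendsto 0)
  exact ge_of_tendsto hlim (eventually_nhdsWithin_of_forall hfence)

section QuadraticForm

variable {n m : Type*} [Fintype n] [Fintype m]

lemma dotProduct_mulVec_linear_add_eq {A P : Matrix n n ℝ} {E : Matrix n m ℝ}
    (hP : P.IsHermitian) (x : n → ℝ) (u : m → ℝ) :
    (A *ᵥ x + E *ᵥ u) ⬝ᵥ P *ᵥ x + x ⬝ᵥ P *ᵥ (A *ᵥ x + E *ᵥ u) =
      x ⬝ᵥ (Aᵀ * P + P * A) *ᵥ x + 2 * (x ⬝ᵥ (P * E) *ᵥ u) := by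
  have hsymm (y : n → ℝ) : y ⬝ᵥ P *ᵥ x = x ⬝ᵥ P *ᵥ y := by
    rw [dotProduct_mulVec, ← mulVec_transpose, ← conjTranspose_eq_transpose_of_trivial, hP.eq,
      dotProduct_comm]
  have hA : x ⬝ᵥ (Aᵀ * P) *ᵥ x = x ⬝ᵥ (P * A) *ᵥ x := by
    rw [← mulVec_mulVec, dotProduct_mulVec, vecMul_transpose, hsymm, mulVec_mulVec]
  rw [hsymm, add_mulVec, dotProduct_add, hA, mulVec_add, dotProduct_add, mulVec_mulVec,
    mulVec_mulVec]
  ring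

lemma dotProduct_mulVec_eq_inner [DecidableEq m] (M : Matrix n m ℝ) (x : EuclideanSpace ℝ n)
    (y : EuclideanSpace ℝ m) : x ⬝ᵥ M *ᵥ y = ⟪x, toEuclideanLin M y⟫_ℝ := by
  simp [EuclideanSpace.inner_eq_star_dotProduct, toLpLin_apply, dotProduct_comm]

lemma dotProduct_mulVec_le_opNorm_mul [DecidableEq m] (M : Matrix n m ℝ)
    (x : EuclideanSpace ℝ n) (y : EuclideanSpace ℝ m) :
    x ⬝ᵥ M *ᵥ y ≤ ‖LinearMap.toContinuousLinearMap (toEuclideanLin M)‖ * ‖x‖ * ‖y‖ := by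
  set T := LinearMap.toContinuousLinearMap (toEuclideanLin M)
  calc x ⬝ᵥ M *ᵥ y = ⟪x, T y⟫_ℝ := dotProduct_mulVec_eq_inner M x y
    _ ≤ ‖x‖ * ‖T y‖ := real_inner_le_norm _ _
    _ ≤ ‖x‖ * (‖T‖ * ‖y‖) := by gcongr; exact T.le_opNorm y
    _ = ‖T‖ * ‖x‖ * ‖y‖ := by ring

variable [DecidableEq n]

theorem HasDerivAt.dotProduct_mulVec_self (M : Matrix n n ℝ) {z : ℝ → EuclideanSpace ℝ n}
    {z' : EuclideanSpace ℝ n} {t : ℝ} (hz : HasDerivAt z z' t) :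
    HasDerivAt (fun s ↦ z s ⬝ᵥ M *ᵥ z s) (z' ⬝ᵥ M *ᵥ z t + z t ⬝ᵥ M *ᵥ z') t := by
  set T := LinearMap.toContinuousLinearMap (toEuclideanLin M)
  have hT (x y : EuclideanSpace ℝ n) : x ⬝ᵥ M *ᵥ y = ⟪x, T y⟫_ℝ :=
    dotProduct_mulVec_eq_inner M x y
  simp only [hT, add_comm ⟪z', _⟫_ℝ]
  exact hz.inner ℝ (T.hasFDerivAt.comp_hasDerivAt t hz)

namespace Matrix.IsHermitian

variable {M : Matrix n n ℝ} (hM : M.IsHermitian)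

lemma dotProduct_mulVec_eq_sum_eigenvalues (x : EuclideanSpace ℝ n) :
    x ⬝ᵥ M *ᵥ x = ∑ i, hM.eigenvalues i * ⟪hM.eigenvectorBasis i, x⟫_ℝ ^ 2 := by
  set b := hM.eigenvectorBasis
  have hsymm : (toEuclideanLin M).IsSymmetric := isSymmetric_toEuclideanLin_iff.2 hM
  have heig (i : n) : toEuclideanLin M (b i) = hM.eigenvalues i • b i := by
    ext j
    simpa [toLpLin_apply] using congrFun (hM.mulVec_eigenvectorBasis i) j
  rw [dotProduct_mulVec_eq_inner, ← b.sum_inner_mul_inner]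
  refine Finset.sum_congr rfl fun i _ ↦ ?_
  rw [← hsymm, heig, real_inner_smul_left, real_inner_comm x]
  ring

lemma norm_sq_eq_sum_inner_eigenvectorBasis (x : EuclideanSpace ℝ n) :
    ‖x‖ ^ 2 = ∑ i, ⟪hM.eigenvectorBasis i, x⟫_ℝ ^ 2 := by
  rw [← real_inner_self_eq_norm_sq, ← hM.eigenvectorBasis.sum_inner_mul_inner]
  refine Finset.sum_congr rfl fun i _ ↦ ?_
  rw [real_inner_comm x]
  ring

lemma iInf_eigenvalues_mul_norm_sq_le (x : EuclideanSpace ℝ n) :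
    (⨅ i, hM.eigenvalues i) * ‖x‖ ^ 2 ≤ x ⬝ᵥ M *ᵥ x := by
  rw [hM.dotProduct_mulVec_eq_sum_eigenvalues, hM.norm_sq_eq_sum_inner_eigenvectorBasis,
    Finset.mul_sum]
  gcongr with i
  exact ciInf_le (Finite.bddBelow_range _) i

lemma dotProduct_mulVec_le_iSup_eigenvalues_mul_norm_sq (x : EuclideanSpace ℝ n) :
    x ⬝ᵥ M *ᵥ x ≤ (⨆ i, hM.eigenvalues i) * ‖x‖ ^ 2 := by
  rw [hM.dotProduct_mulVec_eq_sum_eigenvalues, hM.norm_sq_eq_sum_inner_eigenvectorBasis,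
    Finset.mul_sum]
  gcongr with i
  exact le_ciSup (Finite.bddAbove_range _) i

end Matrix.IsHermitian

namespace Matrix.PosDef

variable [Nonempty n] {M : Matrix n n ℝ}

lemma iInf_eigenvalues_pos (hM : M.PosDef) : 0 < ⨅ i, hM.isHermitian.eigenvalues i := by
  obtain ⟨j, hj⟩ := Finite.exists_min hM.isHermitian.eigenvalues
  exact (hM.eigenvalues_pos j).trans_le (le_ciInf hj)

lemma iSup_eigenvalues_pos (hM : M.PosDef) : 0 < ⨆ i, hM.isHermitian.eigenvalues i :=
  (hM.eigenvalues_pos (Classical.arbitrary n)).trans_le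
    (le_ciSup (Finite.bddAbove_range _) _)

lemma le_norm_of_iSup_eigenvalues_mul_sq_le (hM : M.PosDef) {x : EuclideanSpace ℝ n} {r : ℝ}
    (h : (⨆ i, hM.isHermitian.eigenvalues i) * r ^ 2 ≤ x ⬝ᵥ M *ᵥ x) : r ≤ ‖x‖ := by
  have hsq : r ^ 2 ≤ ‖x‖ ^ 2 := le_of_mul_le_mul_left
    (h.trans (hM.isHermitian.dotProduct_mulVec_le_iSup_eigenvalues_mul_norm_sq x))
    hM.iSup_eigenvalues_pos
  exact (le_abs_self r).trans (abs_le_of_sq_le_sq hsq (norm_nonneg x))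

end Matrix.PosDef

section LinearSystem

variable {A P Q : Matrix n n ℝ} {E : Matrix n m ℝ}

theorem HasDerivAt.dotProduct_mulVec_self_of_linear (hP : P.IsHermitian)
    {z : ℝ → EuclideanSpace ℝ n} {u : m → ℝ} {t : ℝ}
    (hz : HasDerivAt z (WithLp.toLp 2 (A *ᵥ z t + E *ᵥ u)) t) :
    HasDerivAt (fun s ↦ z s ⬝ᵥ P *ᵥ z s)
      (z t ⬝ᵥ (Aᵀ * P + P * A) *ᵥ z t + 2 * (z t ⬝ᵥ (P * E) *ᵥ u)) t :=
  (hz.dotProduct_mulVec_self P).congr_deriv (dotProduct_mulVec_linear_add_eq hP _ u)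

lemma dotProduct_mulVec_le_neg_iInf_eigenvalues_mul_norm_sq (hQ : Q.IsHermitian)
    (hLyap : (-Q - (Aᵀ * P + P * A)).PosSemidef) (x : EuclideanSpace ℝ n) :
    x ⬝ᵥ (Aᵀ * P + P * A) *ᵥ x ≤ -((⨅ i, hQ.eigenvalues i) * ‖x‖ ^ 2) := by
  have h := hLyap.dotProduct_mulVec_nonneg x
  simp only [sub_mulVec, neg_mulVec, dotProduct_sub, dotProduct_neg, star_trivial] at h
  linarith [hQ.iInf_eigenvalues_mul_norm_sq_le x]

lemma lyapunov_rate_nonpos_of_le_norm [DecidableEq m] (hQ : Q.IsHermitian)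
    (hLyap : (-Q - (Aᵀ * P + P * A)).PosSemidef) (hQ_pos : 0 < ⨅ i, hQ.eigenvalues i)
    {x : EuclideanSpace ℝ n} {u : EuclideanSpace ℝ m} {r : ℝ} (hu : ‖u‖ ≤ r)
    (hx : 2 * ‖LinearMap.toContinuousLinearMap (toEuclideanLin (P * E))‖ /
      (⨅ i, hQ.eigenvalues i) * r ≤ ‖x‖) :
    x ⬝ᵥ (Aᵀ * P + P * A) *ᵥ x + 2 * (x ⬝ᵥ (P * E) *ᵥ u) ≤ 0 := by
  set α := ⨅ i, hQ.eigenvalues i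
  set k := ‖LinearMap.toContinuousLinearMap (toEuclideanLin (P * E))‖
  calc x ⬝ᵥ (Aᵀ * P + P * A) *ᵥ x + 2 * (x ⬝ᵥ (P * E) *ᵥ u)
      ≤ -(α * ‖x‖ ^ 2) + 2 * (k * ‖x‖ * ‖u‖) := by
        gcongr
        · exact dotProduct_mulVec_le_neg_iInf_eigenvalues_mul_norm_sq hQ hLyap x
        · exact dotProduct_mulVec_le_opNorm_mul (P * E) x u
    _ ≤ -(α * ‖x‖ ^ 2) + 2 * (k * ‖x‖ * r) := by gcongr
    _ = α * ‖x‖ * (2 * k / α * r - ‖x‖) := by field_simp; ring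
    _ ≤ 0 := mul_nonpos_of_nonneg_of_nonpos (by positivity) (by linarith)

end LinearSystem

theorem stmt9_general
    (A : Matrix (Fin 14) (Fin 14) ℝ) (E : Matrix (Fin 14) (Fin 3) ℝ)
    (P Q : Matrix (Fin 14) (Fin 14) ℝ) (hP : P.PosDef) (hQ : Q.PosDef)
    (hLyap : (-Q - (Aᵀ * P + P * A)).PosSemidef)
    (rbar : ℝ)
    (d : ℝ → V3) (hdbound : ∀ t, 0 ≤ t → ‖d t‖ ≤ rbar)
    (z : ℝ → V14)
    (hode : ∀ t, 0 ≤ t → HasDerivAt z (odeRHS A E (z t) (d t)) t)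
    (α c R ρstar : ℝ)
    (hα : α = lamMin Q hQ.isHermitian) (hc : c = 2 * opPE P E)
    (hR : R = (c / α) * rbar) (hρstar : ρstar = lamMax P hP.isHermitian * R ^ 2) :
    ∀ ρ, ρstar ≤ ρ → ∀ t₀, 0 ≤ t₀ → lyapV P (z t₀) ≤ ρ →
      ∀ t, t₀ ≤ t → lyapV P (z t) ≤ ρ := by
  subst hα hc hR hρstar
  intro ρ hρ t₀ ht₀ h₀ t ht
  have hderiv (s : ℝ) (hs : t₀ ≤ s) := (hode s (ht₀.trans hs)).dotProduct_mulVec_self_of_linear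
    hP.isHermitian
  refine image_le_of_deriv_right_nonpos_of_ge
    (fun s hs ↦ (hderiv s hs.1).continuousAt.continuousWithinAt)
    (fun s hs ↦ (hderiv s hs.1).hasDerivWithinAt) h₀ (fun s hs hρs ↦ ?_) ⟨ht, le_rfl⟩
  exact lyapunov_rate_nonpos_of_le_norm hQ.isHermitian hLyap hQ.iInf_eigenvalues_pos
    (hdbound s (ht₀.trans hs.1)) (hP.le_norm_of_iSup_eigenvalues_mul_sq_le (hρ.trans hρs))

/-- With `α = λ_min(Q)`, `c = 2‖P·E‖`, `R = (c/α) r̄`,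
`ρ* = λ_max(P) R²`: forward invariance holds from any starting time: for every
`ρ ≥ ρ*` and every `t₀ ≥ 0`, if `V(z(t₀)) ≤ ρ` then `V(z(t)) ≤ ρ` for all `t ≥ t₀`. -/
theorem stmt9
    (A : Matrix (Fin 14) (Fin 14) ℝ) (E : Matrix (Fin 14) (Fin 3) ℝ)
    (P Q : Matrix (Fin 14) (Fin 14) ℝ) (hP : P.PosDef) (hQ : Q.PosDef)
    (hLyap : (-Q - (Aᵀ * P + P * A)).PosSemidef)
    (rbar : ℝ) (hrbar : 0 ≤ rbar)
    (d : ℝ → V3) (hd : Continuous d) (hdbound : ∀ t, 0 ≤ t → ‖d t‖ ≤ rbar)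
    (z : ℝ → V14)
    (hode : ∀ t, 0 ≤ t → HasDerivAt z (odeRHS A E (z t) (d t)) t)
    (α c R ρstar : ℝ)
    (hα : α = lamMin Q hQ.isHermitian) (hc : c = 2 * opPE P E)
    (hR : R = (c / α) * rbar) (hρstar : ρstar = lamMax P hP.isHermitian * R ^ 2) :
    ∀ ρ, ρstar ≤ ρ → ∀ t₀, 0 ≤ t₀ → lyapV P (z t₀) ≤ ρ →
      ∀ t, t₀ ≤ t → lyapV P (z t) ≤ ρ :=
  stmt9_general A E P Q hP hQ hLyap rbar d hdbound z hode α c R ρstar hα hc hR hρstar
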